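/- arXiv:1510.02008 — 4 statements merged into one kernel-verified Lean document; each statement's English description precedes it below -/
import Mathlib

section
/- Let α, β, p be complex numbers with Re α > 0, Re β > 0, p ≠ 0, p² ≠ β², and R₁ := (p² + β²)² − 4αβp² ≠ 0; set R₂ := (p² + β²)² + 4αβp² and Δ(δ) := R₁² sinh²((α+β)δ/2) − R₂² sinh²((α−β)δ/2). Then the function g₂₂(δ) = (e^{−(α+β)δ}/(2α(p² − β²)p))·[R₁ sinh((α+β)δ) + R₂ sinh((α−β)δ) + 2Δ(δ)/R₁] tends to R₁/(2α(p² − β²)p) as the real parameter δ → +∞. -/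
/-! After multiplication by `e^{-(α+β)δ}` each hyperbolic sine becomes a combination of
exponentials `e^{-cδ}` with `Re c ≥ 0`, and only those with `c = 0` survive as `δ → ∞`:
`e^{-(α+β)δ} sinh((α+β)δ) → 1/2`, `e^{-(α+β)δ} sinh²((α+β)δ/2) → 1/4`, while the two terms
in `α − β` tend to `0`. The limit is therefore `(R₁/2 + 2 (R₁²/4)/R₁)/(2α(p² − β²)p)`. -/

open Complex Filter Topology

lemma exp_neg_mul_sinh (z w : ℂ) :
    cexp (-z) * sinh w = (cexp (w - z) - cexp (-(z + w))) / 2 := by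
  rw [Complex.sinh, mul_div_assoc', mul_sub, ← Complex.exp_add, ← Complex.exp_add]
  ring_nf

lemma exp_neg_mul_sinh_half_sq (z w : ℂ) :
    cexp (-z) * sinh (w / 2) ^ 2 = (cexp ((w - z) / 2) - cexp (-(z + w) / 2)) ^ 2 / 4 := by
  have h : cexp (-z) = cexp (-z / 2) ^ 2 := by rw [← Complex.exp_nat_mul]; ring_nf
  rw [h, Complex.sinh]
  simp only [div_pow, ← mul_pow, mul_div_assoc', mul_sub, ← Complex.exp_add]
  ring_nf

lemma tendsto_cexp_neg_mul_atTop {c : ℂ} (hc : 0 < c.re) :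
    Tendsto (fun δ : ℝ => cexp (-c * δ)) atTop (𝓝 0) := by
  refine Complex.tendsto_exp_nhds_zero_iff.mpr ?_
  simp only [neg_mul, neg_re, mul_re, ofReal_re, ofReal_im, mul_zero, sub_zero]
  exact tendsto_neg_atTop_atBot.comp (tendsto_id.const_mul_atTop hc)

section Limits

variable {a b c : ℂ}

lemma tendsto_cexp_neg_mul_mul_sinh (hc : 0 < c.re) :
    Tendsto (fun δ : ℝ => cexp (-c * δ) * sinh (c * δ)) atTop (𝓝 (1 / 2)) := by
  have h2c : 0 < (2 * c).re := by simpa using hc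
  have hsum : ∀ δ : ℝ, cexp (-c * δ) * sinh (c * δ) = (1 - cexp (-(2 * c) * δ)) / 2 := by
    intro δ
    rw [neg_mul, exp_neg_mul_sinh, sub_self, Complex.exp_zero]
    ring_nf
  simp only [hsum]
  simpa using ((tendsto_const_nhds (x := (1 : ℂ))).sub (tendsto_cexp_neg_mul_atTop h2c)).div_const 2

lemma tendsto_cexp_neg_mul_mul_sinh_half_sq (hc : 0 < c.re) :
    Tendsto (fun δ : ℝ => cexp (-c * δ) * sinh (c * δ / 2) ^ 2) atTop (𝓝 (1 / 4)) := by
  have hsum : ∀ δ : ℝ, cexp (-c * δ) * sinh (c * δ / 2) ^ 2 = (1 - cexp (-c * δ)) ^ 2 / 4 := by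
    intro δ
    rw [neg_mul, exp_neg_mul_sinh_half_sq, sub_self, zero_div, Complex.exp_zero]
    ring_nf
  simp only [hsum]
  simpa using (((tendsto_const_nhds (x := (1 : ℂ))).sub (tendsto_cexp_neg_mul_atTop hc)).pow 2).div_const 4

lemma tendsto_cexp_neg_add_mul_mul_sinh_sub (ha : 0 < a.re) (hb : 0 < b.re) :
    Tendsto (fun δ : ℝ => cexp (-(a + b) * δ) * sinh ((a - b) * δ)) atTop (𝓝 0) := by
  have hsum : ∀ δ : ℝ, cexp (-(a + b) * δ) * sinh ((a - b) * δ) =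
      (cexp (-(2 * b) * δ) - cexp (-(2 * a) * δ)) / 2 := by
    intro δ
    rw [neg_mul, exp_neg_mul_sinh]
    ring_nf
  simp only [hsum]
  simpa using ((tendsto_cexp_neg_mul_atTop (c := 2 * b) (by simpa using hb)).sub
    (tendsto_cexp_neg_mul_atTop (c := 2 * a) (by simpa using ha))).div_const 2

lemma tendsto_cexp_neg_add_mul_mul_sinh_sub_half_sq (ha : 0 < a.re) (hb : 0 < b.re) :
    Tendsto (fun δ : ℝ => cexp (-(a + b) * δ) * sinh ((a - b) * δ / 2) ^ 2) atTop (𝓝 0) := by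
  have hsum : ∀ δ : ℝ, cexp (-(a + b) * δ) * sinh ((a - b) * δ / 2) ^ 2 =
      (cexp (-b * δ) - cexp (-a * δ)) ^ 2 / 4 := by
    intro δ
    rw [neg_mul, exp_neg_mul_sinh_half_sq]
    ring_nf
  simp only [hsum]
  simpa using (((tendsto_cexp_neg_mul_atTop hb).sub
    (tendsto_cexp_neg_mul_atTop ha)).pow 2).div_const 4

end Limits

theorem stmt_8_general (α β p : ℂ) (hα : 0 < α.re) (hβ : 0 < β.re)
    (hR₁ : (p ^ 2 + β ^ 2) ^ 2 - 4 * α * β * p ^ 2 ≠ 0) :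
    Tendsto (fun δ : ℝ =>
        Complex.exp (-(α + β) * (δ : ℂ)) / (2 * α * (p ^ 2 - β ^ 2) * p) *
          (((p ^ 2 + β ^ 2) ^ 2 - 4 * α * β * p ^ 2) * Complex.sinh ((α + β) * (δ : ℂ))
            + ((p ^ 2 + β ^ 2) ^ 2 + 4 * α * β * p ^ 2) * Complex.sinh ((α - β) * (δ : ℂ))
            + 2 * (((p ^ 2 + β ^ 2) ^ 2 - 4 * α * β * p ^ 2) ^ 2 *
                    Complex.sinh ((α + β) * (δ : ℂ) / 2) ^ 2
                  - ((p ^ 2 + β ^ 2) ^ 2 + 4 * α * β * p ^ 2) ^ 2 *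
                    Complex.sinh ((α - β) * (δ : ℂ) / 2) ^ 2) /
                ((p ^ 2 + β ^ 2) ^ 2 - 4 * α * β * p ^ 2)))
      atTop
      (nhds (((p ^ 2 + β ^ 2) ^ 2 - 4 * α * β * p ^ 2) /
        (2 * α * (p ^ 2 - β ^ 2) * p))) := by
  set R₁ : ℂ := (p ^ 2 + β ^ 2) ^ 2 - 4 * α * β * p ^ 2
  set R₂ : ℂ := (p ^ 2 + β ^ 2) ^ 2 + 4 * α * β * p ^ 2
  set C : ℂ := 2 * α * (p ^ 2 - β ^ 2) * p
  have hαβ : 0 < (α + β).re := by simpa using add_pos hα hβ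
  have hlim := ((((tendsto_cexp_neg_mul_mul_sinh hαβ).const_mul R₁).add
      ((tendsto_cexp_neg_add_mul_mul_sinh_sub hα hβ).const_mul R₂)).add
    ((((tendsto_cexp_neg_mul_mul_sinh_half_sq hαβ).const_mul (R₁ ^ 2)).sub
      ((tendsto_cexp_neg_add_mul_mul_sinh_sub_half_sq hα hβ).const_mul (R₂ ^ 2))).const_mul 2
        |>.div_const R₁)).div_const C
  have hval : (R₁ * (1 / 2) + R₂ * 0 + 2 * (R₁ ^ 2 * (1 / 4) - R₂ ^ 2 * 0) / R₁) / C = R₁ / C := by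
    field_simp
    ring
  rw [hval] at hlim
  refine hlim.congr fun δ => ?_
  ring

/-- Limit of the (2,2) entry (22) of the matrix coefficient as the distance `δ` to the
boundary tends to `+∞`: `g₂₂(δ) → R₁/(2α(p² − β²)p)`, the whole-plane coefficient
`g₂(p,s)` of (27). -/
theorem stmt_8 (α β p : ℂ) (hα : 0 < α.re) (hβ : 0 < β.re) (hp : p ≠ 0)
    (hpβ : p ^ 2 ≠ β ^ 2)
    (hR₁ : (p ^ 2 + β ^ 2) ^ 2 - 4 * α * β * p ^ 2 ≠ 0) :
    Tendsto (fun δ : ℝ =>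
        Complex.exp (-(α + β) * (δ : ℂ)) / (2 * α * (p ^ 2 - β ^ 2) * p) *
          (((p ^ 2 + β ^ 2) ^ 2 - 4 * α * β * p ^ 2) * Complex.sinh ((α + β) * (δ : ℂ))
            + ((p ^ 2 + β ^ 2) ^ 2 + 4 * α * β * p ^ 2) * Complex.sinh ((α - β) * (δ : ℂ))
            + 2 * (((p ^ 2 + β ^ 2) ^ 2 - 4 * α * β * p ^ 2) ^ 2 *
                    Complex.sinh ((α + β) * (δ : ℂ) / 2) ^ 2
                  - ((p ^ 2 + β ^ 2) ^ 2 + 4 * α * β * p ^ 2) ^ 2 *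
                    Complex.sinh ((α - β) * (δ : ℂ) / 2) ^ 2) /
                ((p ^ 2 + β ^ 2) ^ 2 - 4 * α * β * p ^ 2)))
      atTop
      (nhds (((p ^ 2 + β ^ 2) ^ 2 - 4 * α * β * p ^ 2) /
        (2 * α * (p ^ 2 - β ^ 2) * p))) :=
  stmt_8_general α β p hα hβ hR₁
end

section
/- Let 0 < c_s < c_l, 0 < V < c_s, and set α̂ = √(1 − V²/c_l²), β̂ = √(1 − V²/c_s²), v_l = V/c_l, v_s = V/c_s, R₀ = 4α̂β̂ − (1 + β̂²)², γ₁ = R₀/(2β̂v_s²). Let α̃, β̃ : ℝ → ℂ be functions such that for every real p, Re α̃(p) > 0, α̃(p)² = α̂²p² + 2iv_l p + 1, Re β̃(p) > 0, and β̃(p)² = β̂²p² + 2i(Vc_l/c_s²)p + c_l²/c_s². Define g̃₁(p) = R̃₁(p)/(2β̃(p)(p² − β̃(p)²)p) with R̃₁(p) = (p² + β̃(p)²)² − 4α̃(p)β̃(p)p². Then g̃₁(p) → −γ₁ as p → +∞ and g̃₁(p) → +γ₁ as p → −∞. -/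
/-!
Writing `α̃(p) = p·a(p)` and `β̃(p) = p·b(p)`, the quotient `g̃₁(p)` is homogeneous of degree
zero and equals `G(a, b) = ((1 + b²)² − 4ab) / (2b(1 − b²))`. The quadratic laws force
`a(p)² → α̂²` and `b(p)² → β̂²`, and the condition `Re > 0` selects the root of the sign of `p`:
`(a, b) → ±(α̂, β̂)` as `p → ±∞`. Since `1 − β̂² = v_s² ≠ 0`, `G` is continuous there, `G` is odd,
and `G(α̂, β̂) = −γ₁`.
-/

open Complex Filter Topology

theorem tendsto_of_tendsto_sq_of_re_pos {ι : Type*} {l : Filter ι} {f : ι → ℂ} {s : ℝ}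
    (hs : 0 < s) (hre : ∀ᶠ i in l, 0 < (f i).re)
    (hsq : Tendsto (fun i => f i ^ 2) l (𝓝 ((s : ℂ) ^ 2))) :
    Tendsto f l (𝓝 (s : ℂ)) := by
  rw [tendsto_iff_norm_sub_tendsto_zero] at hsq ⊢
  refine squeeze_zero' (.of_forall fun _ => norm_nonneg _) ?_
    (by simpa using hsq.div_const s)
  filter_upwards [hre] with i hi
  -- `|f + s| ≥ Re (f + s) ≥ s` divides `|f² - s²| = |f - s| |f + s|`.
  have hsum : s ≤ ‖f i + s‖ := by
    refine le_trans ?_ (re_le_norm _)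
    simp only [add_re, ofReal_re]
    linarith
  rw [le_div_iff₀ hs, show f i ^ 2 - (s : ℂ) ^ 2 = (f i - s) * (f i + s) by ring, norm_mul]
  exact mul_le_mul_of_nonneg_left hsum (norm_nonneg _)

theorem tendsto_sq_div_atTop_of_sq_eq {f : ℝ → ℂ} {a b c : ℂ}
    (hf : ∀ p : ℝ, f p ^ 2 = a * (p : ℂ) ^ 2 + b * p + c) :
    Tendsto (fun p : ℝ => (f p / p) ^ 2) atTop (𝓝 a) := by
  have hinv : Tendsto (fun p : ℝ => (p : ℂ)⁻¹) atTop (𝓝 0) := by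
    simpa [Function.comp_def] using (continuous_ofReal.tendsto 0).comp tendsto_inv_atTop_zero
  have hlim : Tendsto (fun p : ℝ => a + b * (p : ℂ)⁻¹ + c * (p : ℂ)⁻¹ ^ 2) atTop (𝓝 a) := by
    simpa using (tendsto_const_nhds.add (hinv.const_mul b)).add ((hinv.pow 2).const_mul c)
  refine hlim.congr' ?_
  filter_upwards [eventually_ne_atTop 0] with p hp
  have hp : (p : ℂ) ≠ 0 := ofReal_ne_zero.mpr hp
  rw [div_pow, hf p]
  field_simp

theorem tendsto_div_atTop_of_sq_eq {f : ℝ → ℂ} {s : ℝ} {b c : ℂ} (hs : 0 < s)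
    (hre : ∀ p, 0 < (f p).re) (hf : ∀ p : ℝ, f p ^ 2 = (s : ℂ) ^ 2 * (p : ℂ) ^ 2 + b * p + c) :
    Tendsto (fun p : ℝ => f p / p) atTop (𝓝 (s : ℂ)) := by
  refine tendsto_of_tendsto_sq_of_re_pos hs ?_ (tendsto_sq_div_atTop_of_sq_eq hf)
  filter_upwards [eventually_gt_atTop 0] with p hp
  rw [div_ofReal_re]
  exact div_pos (hre p) hp

theorem tendsto_div_atBot_of_sq_eq {f : ℝ → ℂ} {s : ℝ} {b c : ℂ} (hs : 0 < s)
    (hre : ∀ p, 0 < (f p).re) (hf : ∀ p : ℝ, f p ^ 2 = (s : ℂ) ^ 2 * (p : ℂ) ^ 2 + b * p + c) :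
    Tendsto (fun p : ℝ => f p / p) atBot (𝓝 (-s : ℂ)) := by
  have hneg : Tendsto (fun p : ℝ => f (-p) / ↑(-p)) atTop (𝓝 (-s : ℂ)) := by
    have h := tendsto_div_atTop_of_sq_eq (b := -b) (c := c) hs (fun p => hre (-p))
      fun p => by simpa [mul_neg, neg_mul] using hf (-p)
    simpa [div_neg] using h.neg
  simpa [Function.comp_def] using hneg.comp tendsto_neg_atBot_atTop

theorem one_sub_sq_div_sq_pos {v c : ℝ} (h : |v| < c) : 0 < 1 - v ^ 2 / c ^ 2 := by
  have hc : 0 < c := (abs_nonneg v).trans_lt h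
  rw [sub_pos, div_lt_one (by positivity)]
  exact sq_lt_sq.mpr (by rwa [abs_of_pos hc])

noncomputable def rayleighQuot (a b : ℂ) : ℂ :=
  ((1 + b ^ 2) ^ 2 - 4 * a * b) / (2 * b * (1 - b ^ 2))

theorem rayleighQuot_neg (a b : ℂ) : rayleighQuot (-a) (-b) = -rayleighQuot a b := by
  simp only [rayleighQuot, neg_sq, mul_neg, neg_mul, neg_neg, div_neg]

theorem rayleighQuot_div {p : ℂ} (hp : p ≠ 0) (α β : ℂ) :
    rayleighQuot (α / p) (β / p) =
      ((p ^ 2 + β ^ 2) ^ 2 - 4 * α * β * p ^ 2) / (2 * β * (p ^ 2 - β ^ 2) * p) := by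
  rw [rayleighQuot]
  field_simp

theorem Filter.Tendsto.rayleighQuot {ι : Type*} {l : Filter ι} {f g : ι → ℂ} {a b : ℂ}
    (hf : Tendsto f l (𝓝 a)) (hg : Tendsto g l (𝓝 b)) (hb : 2 * b * (1 - b ^ 2) ≠ 0) :
    Tendsto (fun i => _root_.rayleighQuot (f i) (g i)) l (𝓝 (_root_.rayleighQuot a b)) :=
  ((tendsto_const_nhds.add (hg.pow 2)).pow 2 |>.sub ((hf.const_mul 4).mul hg)).div
    ((hg.const_mul 2).mul (tendsto_const_nhds.sub (hg.pow 2))) hb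

/-- Asymptotics (29) of the scaled scalar coefficient (28.2):
`g̃₁(p) → −γ₁` as `p → +∞` and `g̃₁(p) → +γ₁` as `p → −∞`, where
`γ₁ = R₀/(2β̂v_s²)`, `R₀ = 4α̂β̂ − (1 + β̂²)²`. -/
theorem stmt_9 (cl cs V : ℝ) (hcs : 0 < cs) (hcl : cs < cl) (hV0 : 0 < V) (hVs : V < cs)
    (αt βt : ℝ → ℂ)
    (hαt : ∀ p : ℝ, 0 < (αt p).re ∧
      (αt p) ^ 2 = ((Real.sqrt (1 - V ^ 2 / cl ^ 2) : ℝ) : ℂ) ^ 2 * (p : ℂ) ^ 2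
        + 2 * I * ((V / cl : ℝ) : ℂ) * (p : ℂ) + 1)
    (hβt : ∀ p : ℝ, 0 < (βt p).re ∧
      (βt p) ^ 2 = ((Real.sqrt (1 - V ^ 2 / cs ^ 2) : ℝ) : ℂ) ^ 2 * (p : ℂ) ^ 2
        + 2 * I * ((V * cl / cs ^ 2 : ℝ) : ℂ) * (p : ℂ) + ((cl ^ 2 / cs ^ 2 : ℝ) : ℂ)) :
    Tendsto (fun p : ℝ =>
        (((p : ℂ) ^ 2 + (βt p) ^ 2) ^ 2 - 4 * αt p * βt p * (p : ℂ) ^ 2) /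
          (2 * βt p * ((p : ℂ) ^ 2 - (βt p) ^ 2) * (p : ℂ)))
      atTop
      (nhds (-(((4 * Real.sqrt (1 - V ^ 2 / cl ^ 2) * Real.sqrt (1 - V ^ 2 / cs ^ 2)
          - (1 + Real.sqrt (1 - V ^ 2 / cs ^ 2) ^ 2) ^ 2) /
            (2 * Real.sqrt (1 - V ^ 2 / cs ^ 2) * (V / cs) ^ 2) : ℝ) : ℂ))) ∧
    Tendsto (fun p : ℝ =>
        (((p : ℂ) ^ 2 + (βt p) ^ 2) ^ 2 - 4 * αt p * βt p * (p : ℂ) ^ 2) /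
          (2 * βt p * ((p : ℂ) ^ 2 - (βt p) ^ 2) * (p : ℂ)))
      atBot
      (nhds (((4 * Real.sqrt (1 - V ^ 2 / cl ^ 2) * Real.sqrt (1 - V ^ 2 / cs ^ 2)
          - (1 + Real.sqrt (1 - V ^ 2 / cs ^ 2) ^ 2) ^ 2) /
            (2 * Real.sqrt (1 - V ^ 2 / cs ^ 2) * (V / cs) ^ 2) : ℝ) : ℂ)) := by
  set αh := Real.sqrt (1 - V ^ 2 / cl ^ 2)
  set βh := Real.sqrt (1 - V ^ 2 / cs ^ 2)
  have hl : 0 < 1 - V ^ 2 / cl ^ 2 := one_sub_sq_div_sq_pos (by rw [abs_of_pos hV0]; linarith)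
  have hs : 0 < 1 - V ^ 2 / cs ^ 2 := one_sub_sq_div_sq_pos (by rwa [abs_of_pos hV0])
  have hvs : 1 - (βh : ℂ) ^ 2 = ((V / cs : ℝ) : ℂ) ^ 2 := by
    rw [← ofReal_pow, Real.sq_sqrt hs.le]; push_cast; field_simp; ring
  have hden : 2 * (βh : ℂ) * (1 - (βh : ℂ) ^ 2) ≠ 0 := by
    have : 0 < βh := Real.sqrt_pos.mpr hs
    rw [hvs]
    exact_mod_cast (by positivity : 2 * βh * (V / cs) ^ 2 ≠ 0)
  have hG : rayleighQuot αh βh = -(((4 * αh * βh - (1 + βh ^ 2) ^ 2) /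
      (2 * βh * (V / cs) ^ 2) : ℝ) : ℂ) := by
    rw [rayleighQuot, hvs]; push_cast; ring
  have hg : ∀ p : ℝ, p ≠ 0 → rayleighQuot (αt p / p) (βt p / p) =
      (((p : ℂ) ^ 2 + (βt p) ^ 2) ^ 2 - 4 * αt p * βt p * (p : ℂ) ^ 2) /
        (2 * βt p * ((p : ℂ) ^ 2 - (βt p) ^ 2) * (p : ℂ)) :=
    fun p hp => rayleighQuot_div (ofReal_ne_zero.mpr hp) _ _
  constructor
  · rw [← hG]
    refine Tendsto.congr' ?_ <| Tendsto.rayleighQuot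
      (tendsto_div_atTop_of_sq_eq (Real.sqrt_pos.mpr hl) (fun p => (hαt p).1) fun p => (hαt p).2)
      (tendsto_div_atTop_of_sq_eq (Real.sqrt_pos.mpr hs) (fun p => (hβt p).1) fun p => (hβt p).2)
      hden
    filter_upwards [eventually_ne_atTop 0] with p hp using hg p hp
  · rw [← neg_neg (ofReal _), ← hG, ← rayleighQuot_neg]
    refine Tendsto.congr' ?_ <| Tendsto.rayleighQuot
      (tendsto_div_atBot_of_sq_eq (Real.sqrt_pos.mpr hl) (fun p => (hαt p).1) fun p => (hαt p).2)
      (tendsto_div_atBot_of_sq_eq (Real.sqrt_pos.mpr hs) (fun p => (hβt p).1) fun p => (hβt p).2)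
      (by rwa [neg_sq, mul_neg, neg_mul, neg_ne_zero])
    filter_upwards [eventually_ne_atBot 0] with p hp using hg p hp
end

section
/- Let 0 < c_s < c_l and define the Rayleigh function R₀(V) = 4√(1 − V²/c_l²)·√(1 − V²/c_s²) − (2 − V²/c_s²)² for V ∈ [0, c_s]. Then there exists a unique c_R ∈ (0, c_s) with R₀(c_R) = 0; moreover R₀(V) > 0 for all V ∈ (0, c_R) and R₀(V) < 0 for all V ∈ (c_R, c_s). -/
/-!
With `x = V²/c_s²` and `k = c_s²/c_l² ∈ (0, 1)` the Rayleigh function becomes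
`R(x) = 4√(1 - k x)√(1 - x) - (2 - x)²`, and multiplying by the positive conjugate
`4√(1 - k x)√(1 - x) + (2 - x)²` gives `x · Q(x)` with the cubic
`Q(x) = 16(1 - k)(1 - x) - x(x² - 8x + 8)`. So on `(0, 1)` the sign of `R` is that of `Q`.
Now `Q(0) > 0 > Q(1)`, and `Q(x)/(1 - x)` is strictly decreasing on `[0, 1)`, so `Q` has exactly
one root `c` there and changes sign from `+` to `-`; then `c_R = c_s √c`.
-/

noncomputable def rayleigh (cl cs V : ℝ) : ℝ :=
  4 * √(1 - V ^ 2 / cl ^ 2) * √(1 - V ^ 2 / cs ^ 2) - (2 - V ^ 2 / cs ^ 2) ^ 2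

noncomputable def reducedRayleigh (k x : ℝ) : ℝ :=
  4 * √(1 - k * x) * √(1 - x) - (2 - x) ^ 2

def rayleighCubic (k x : ℝ) : ℝ :=
  16 * (1 - k) * (1 - x) - x * (x ^ 2 - 8 * x + 8)

lemma rayleighCubic_cross_lt (k : ℝ) {a b : ℝ} (hab : a < b) (hb : b ≤ 1) :
    (1 - a) * rayleighCubic k b < (1 - b) * rayleighCubic k a := by
  have hdiff : (1 - a) * rayleighCubic k b - (1 - b) * rayleighCubic k a
      = -((b - a) * ((1 - a) * (1 - b) * (7 - a - b) + 1)) := by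
    unfold rayleighCubic; ring
  have hprod : 0 ≤ (1 - a) * (1 - b) * (7 - a - b) := by
    apply mul_nonneg (mul_nonneg _ _) <;> linarith
  rw [← sub_neg, hdiff, neg_neg_iff_pos]
  exact mul_pos (sub_pos.2 hab) (by linarith)

lemma exists_sign_rayleighCubic {k : ℝ} (hk : k < 1) :
    ∃ c ∈ Set.Ioo (0 : ℝ) 1, ∀ x ≤ 1,
      SignType.sign (rayleighCubic k x) = SignType.sign (c - x) := by
  have hcont : ContinuousOn (rayleighCubic k) (Set.Icc 0 1) := by
    unfold rayleighCubic; fun_prop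
  have hzero : (0 : ℝ) ∈ Set.Ioo (rayleighCubic k 1) (rayleighCubic k 0) := by
    constructor <;> (unfold rayleighCubic; nlinarith)
  obtain ⟨c, hc, hQc⟩ := intermediate_value_Ioo' zero_le_one hcont hzero
  refine ⟨c, hc, fun x hx => ?_⟩
  have hc1 : 0 < 1 - c := by linarith [hc.2]
  rcases lt_trichotomy x c with hxc | rfl | hcx
  · have := rayleighCubic_cross_lt k hxc hc.2.le
    rw [hQc, mul_zero] at this
    rw [sign_pos (pos_of_mul_pos_right this hc1.le), sign_pos (sub_pos.2 hxc)]
  · rw [hQc, sub_self]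
  · have := rayleighCubic_cross_lt k hcx hx
    rw [hQc, mul_zero] at this
    rw [sign_neg (neg_of_mul_neg_right this hc1.le), sign_neg (sub_neg.2 hcx)]

lemma reducedRayleigh_mul_conj {k x : ℝ} (hkx : k * x ≤ 1) (hx : x ≤ 1) :
    reducedRayleigh k x * (4 * √(1 - k * x) * √(1 - x) + (2 - x) ^ 2)
      = x * rayleighCubic k x := by
  have hs := Real.sq_sqrt (sub_nonneg.2 hkx)
  have ht := Real.sq_sqrt (sub_nonneg.2 hx)
  unfold reducedRayleigh rayleighCubic
  linear_combination (16 * (1 - x)) * hs + (16 * √(1 - k * x) ^ 2) * ht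

lemma sign_reducedRayleigh {k x : ℝ} (hkx : k * x ≤ 1) (hx0 : 0 < x) (hx1 : x ≤ 1) :
    SignType.sign (reducedRayleigh k x) = SignType.sign (rayleighCubic k x) := by
  have hconj : 0 < 4 * √(1 - k * x) * √(1 - x) + (2 - x) ^ 2 := by
    have : 0 < (2 - x) ^ 2 := by nlinarith
    positivity
  have := congrArg SignType.sign (reducedRayleigh_mul_conj hkx hx1)
  rwa [sign_mul, sign_mul, sign_pos hconj, sign_pos hx0, mul_one, one_mul] at this

lemma exists_sign_reducedRayleigh {k : ℝ} (hk : k < 1) :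
    ∃ c ∈ Set.Ioo (0 : ℝ) 1, ∀ x ∈ Set.Ioo (0 : ℝ) 1,
      SignType.sign (reducedRayleigh k x) = SignType.sign (c - x) := by
  obtain ⟨c, hc, hsign⟩ := exists_sign_rayleighCubic hk
  refine ⟨c, hc, fun x ⟨hx0, hx1⟩ => ?_⟩
  have hkx : k * x ≤ 1 := by nlinarith
  rw [sign_reducedRayleigh hkx hx0 hx1.le, hsign x hx1.le]

lemma rayleigh_eq_reducedRayleigh {cl cs : ℝ} (hcl : cl ≠ 0) (hcs : cs ≠ 0) (V : ℝ) :
    rayleigh cl cs V = reducedRayleigh (cs ^ 2 / cl ^ 2) (V ^ 2 / cs ^ 2) := by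
  unfold rayleigh reducedRayleigh
  congr 4
  field_simp

lemma sign_sub_sq_div_sq {s c V : ℝ} (hs : 0 < s) (hc : 0 ≤ c) (hV : 0 < V) :
    SignType.sign (c - V ^ 2 / s ^ 2) = SignType.sign (s * √c - V) := by
  have hfac : c - V ^ 2 / s ^ 2 = (s * √c - V) * ((s * √c + V) / s ^ 2) := by
    field_simp
    linear_combination -s ^ 2 * Real.sq_sqrt hc
  have hpos : 0 < (s * √c + V) / s ^ 2 := by positivity
  rw [hfac, sign_mul, sign_pos hpos, mul_one]

lemma exists_sign_rayleigh {cl cs : ℝ} (hcs : 0 < cs) (hcl : cs < cl) :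
    ∃ cR ∈ Set.Ioo 0 cs, ∀ V ∈ Set.Ioo 0 cs,
      SignType.sign (rayleigh cl cs V) = SignType.sign (cR - V) := by
  have hk : cs ^ 2 / cl ^ 2 < 1 := by
    rw [div_lt_one (by nlinarith)]
    gcongr
  obtain ⟨c, ⟨hc0, hc1⟩, hsign⟩ := exists_sign_reducedRayleigh hk
  refine ⟨cs * √c, ⟨mul_pos hcs (Real.sqrt_pos.2 hc0), ?_⟩, fun V ⟨hV0, hVs⟩ => ?_⟩
  · exact mul_lt_of_lt_one_right hcs ((Real.sqrt_lt' one_pos).2 (by rwa [one_pow]))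
  have hx : V ^ 2 / cs ^ 2 ∈ Set.Ioo 0 1 := by
    refine ⟨by positivity, (div_lt_one (by positivity)).2 ?_⟩
    gcongr
  rw [rayleigh_eq_reducedRayleigh (hcs.trans hcl).ne' hcs.ne', hsign _ hx,
    sign_sub_sq_div_sq hcs hc0.le hV0]

/-- The Rayleigh function `R₀(V) = 4√(1 − V²/c_l²)√(1 − V²/c_s²) − (2 − V²/c_s²)²` has a
unique zero `c_R ∈ (0, c_s)`; it is positive on `(0, c_R)` and negative on `(c_R, c_s)`. -/
theorem stmt_11 (cl cs : ℝ) (hcs : 0 < cs) (hcl : cs < cl) :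
    ∃ cR : ℝ, 0 < cR ∧ cR < cs ∧
      (4 * Real.sqrt (1 - cR ^ 2 / cl ^ 2) * Real.sqrt (1 - cR ^ 2 / cs ^ 2)
        - (2 - cR ^ 2 / cs ^ 2) ^ 2 = 0) ∧
      (∀ V : ℝ, 0 < V → V < cR →
        0 < 4 * Real.sqrt (1 - V ^ 2 / cl ^ 2) * Real.sqrt (1 - V ^ 2 / cs ^ 2)
          - (2 - V ^ 2 / cs ^ 2) ^ 2) ∧
      (∀ V : ℝ, cR < V → V < cs →
        4 * Real.sqrt (1 - V ^ 2 / cl ^ 2) * Real.sqrt (1 - V ^ 2 / cs ^ 2)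
          - (2 - V ^ 2 / cs ^ 2) ^ 2 < 0) ∧
      (∀ V : ℝ, 0 < V → V < cs →
        4 * Real.sqrt (1 - V ^ 2 / cl ^ 2) * Real.sqrt (1 - V ^ 2 / cs ^ 2)
          - (2 - V ^ 2 / cs ^ 2) ^ 2 = 0 → V = cR) := by
  obtain ⟨cR, ⟨hcR0, hcRs⟩, hsign⟩ := exists_sign_rayleigh hcs hcl
  refine ⟨cR, hcR0, hcRs, ?_, fun V hV0 hVcR => ?_, fun V hcRV hVs => ?_,
    fun V hV0 hVs hV => ?_⟩
  · have := hsign cR ⟨hcR0, hcRs⟩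
    rwa [sub_self, sign_zero, sign_eq_zero_iff] at this
  · have := hsign V ⟨hV0, hVcR.trans hcRs⟩
    rwa [sign_pos (sub_pos.2 hVcR), sign_eq_one_iff] at this
  · have := hsign V ⟨hcR0.trans hcRV, hVs⟩
    rwa [sign_neg (sub_neg.2 hcRV), sign_eq_neg_one_iff] at this
  · have := hsign V ⟨hV0, hVs⟩
    rw [show rayleigh cl cs V = 0 from hV, sign_zero, eq_comm, sign_eq_zero_iff] at this
    linarith
end

section
/- Let 0 < c_s < c_l, 0 < V < c_s, s > 0 and δ > 0 be real; set α̂ = √(1 − V²/c_l²), β̂ = √(1 − V²/c_s²), v_s = V/c_s, R₀ = 4α̂β̂ − (1 + β̂²)², γ₁ = R₀/(2β̂v_s²). Let α, β : ℝ → ℂ be functions such that for every real p, Re α(p) > 0, α(p)² = α̂²p² + 2ipsV/c_l² + s²/c_l², Re β(p) > 0, and β(p)² = β̂²p² + 2ipsV/c_s² + s²/c_s². Define R₁(p) = (p² + β(p)²)² − 4α(p)β(p)p², R₂(p) = (p² + β(p)²)² + 4α(p)β(p)p², Δ(p) = R₁(p)² sinh²((α(p)+β(p))δ/2) − R₂(p)²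 sinh²((α(p)−β(p))δ/2), and g₁₁(p) = (e^{−(α(p)+β(p))δ}/(2β(p)(p² − β(p)²)p))·[R₁(p) sinh((α(p)+β(p))δ) − R₂(p) sinh((α(p)−β(p))δ) + 2Δ(p)/R₁(p)]. Then g₁₁(p) → −γ₁ as p → +∞ (for all sufficiently large p the expression is defined). -/
/-!
With `a = αδ`, `b = βδ`, multiplying the hyperbolic functions out against `e^{-(a+b)}` gives
`g₁₁ = R₁/D (1 - e^{-a} e^{-b}) - R₂/D (e^{-2b} - e^{-2a})/2 - R₂/D (R₂/R₁) (e^{-b} - e^{-a})²/2`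
with `D = 2β(p² - β²)p`. As `α ~ α̂ p` and `β ~ β̂ p`, the quotients `Rᵢ/D` converge and the
exponentials decay faster than any power of `p`. The delicate factor is `R₂/R₁`: the leading
coefficient `R₁(1, α̂, β̂) = -R₀` vanishes at the Rayleigh speed. But `R₁R₂` is a polynomial in `p`
with constant term `(s/c_s)⁸ ≠ 0`, hence bounded away from `0` at infinity, so
`R₂/R₁ = R₂²/(R₁R₂)` grows at most polynomially. The limit is
`R₁(1, α̂, β̂)/D(1, β̂) = -R₀/(2β̂(1 - β̂²)) = -γ₁`.
-/

open Complex Filter Asymptotics Topology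

theorem Complex.tendsto_of_tendsto_sq {ι : Type*} {l : Filter ι} {z : ι → ℂ} {c : ℝ} (hc : 0 < c)
    (hre : ∀ᶠ i in l, 0 ≤ (z i).re) (h : Tendsto (fun i => z i ^ 2) l (𝓝 ((c : ℂ) ^ 2))) :
    Tendsto z l (𝓝 c) := by
  rw [tendsto_iff_norm_sub_tendsto_zero]
  have hsq : Tendsto (fun i => ‖z i ^ 2 - (c : ℂ) ^ 2‖ / c) l (𝓝 0) := by
    simpa using (tendsto_iff_norm_sub_tendsto_zero.mp h).div_const c
  refine squeeze_zero' (.of_forall fun _ => norm_nonneg _) ?_ hsq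
  filter_upwards [hre] with i hi
  have hnorm : c ≤ ‖z i + c‖ := by
    calc c ≤ (z i + c).re := by simp [hi]
      _ ≤ ‖z i + c‖ := re_le_norm _
  rw [le_div_iff₀ hc]
  calc ‖z i - c‖ * c ≤ ‖z i - c‖ * ‖z i + c‖ := by gcongr
    _ = ‖z i ^ 2 - (c : ℂ) ^ 2‖ := by rw [← norm_mul]; ring_nf

theorem tendsto_div_of_sq_eq {f : ℝ → ℂ} {c : ℝ} {u v : ℂ} (hc : 0 < c)
    (hre : ∀ p, 0 < (f p).re) (hsq : ∀ p : ℝ, f p ^ 2 = c ^ 2 * p ^ 2 + u * p + v) :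
    Tendsto (fun p : ℝ => f p / p) atTop (𝓝 c) := by
  have hinv : Tendsto (fun p : ℝ => (p : ℂ)⁻¹) atTop (𝓝 0) := by
    simpa using (tendsto_inv_atTop_zero (𝕜 := ℝ)).ofReal
  refine tendsto_of_tendsto_sq hc ?_ ?_
  · filter_upwards [eventually_gt_atTop 0] with p hp
    rw [div_ofReal_re]
    exact (div_pos (hre p) hp).le
  · have hlim : Tendsto (fun p : ℝ => (c : ℂ) ^ 2 + u * (p : ℂ)⁻¹ + v * (p : ℂ)⁻¹ ^ 2) atTop
        (𝓝 ((c : ℂ) ^ 2)) := by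
      simpa using ((hinv.const_mul u).const_add _).add ((hinv.pow 2).const_mul v)
    refine hlim.congr' ?_
    filter_upwards [eventually_ne_atTop 0] with p hp
    have hp' : (p : ℂ) ≠ 0 := ofReal_ne_zero.mpr hp
    rw [div_pow, hsq]
    field_simp

theorem tendsto_pow_mul_cexp_neg {w : ℝ → ℂ} {c : ℝ} (hc : 0 < c)
    (hw : Tendsto (fun p : ℝ => w p / p) atTop (𝓝 c)) (n : ℕ) :
    Tendsto (fun p : ℝ => (p : ℂ) ^ n * cexp (-w p)) atTop (𝓝 0) := by
  rw [tendsto_zero_iff_norm_tendsto_zero]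
  have hbound : Tendsto (fun p : ℝ => p ^ (n : ℝ) * Real.exp (-(c / 2) * p)) atTop (𝓝 0) :=
    tendsto_rpow_mul_exp_neg_mul_atTop_nhds_zero n (c / 2) (by positivity)
  refine squeeze_zero' (.of_forall fun _ => norm_nonneg _) ?_ hbound
  have hre : Tendsto (fun p : ℝ => (w p).re / p) atTop (𝓝 c) := by
    simpa [Function.comp_def, div_ofReal_re] using (continuous_re.tendsto _).comp hw
  filter_upwards [hre.eventually (eventually_gt_nhds (half_lt_self hc)), eventually_gt_atTop 0]
    with p hwp hp
  rw [lt_div_iff₀ hp] at hwp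
  rw [norm_mul, norm_pow, norm_real, Real.norm_of_nonneg hp.le, norm_exp, neg_re,
    Real.rpow_natCast]
  gcongr
  linarith

theorem tendsto_div_of_tendsto_div_pow {f g : ℝ → ℂ} {x y : ℂ} (n : ℕ)
    (hf : Tendsto (fun p : ℝ => f p / (p : ℂ) ^ n) atTop (𝓝 x))
    (hg : Tendsto (fun p : ℝ => g p / (p : ℂ) ^ n) atTop (𝓝 y)) (hy : y ≠ 0) :
    Tendsto (fun p => f p / g p) atTop (𝓝 (x / y)) := by
  refine (hf.div hg hy).congr' ?_
  filter_upwards [eventually_ne_atTop 0] with p hp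
  exact div_div_div_cancel_right₀ (pow_ne_zero n (ofReal_ne_zero.mpr hp)) _ _

theorem tendsto_div_pow_of_homogeneous (H : ℂ → ℂ → ℂ → ℂ) (n : ℕ)
    (hH : ∀ t x y, H t (t * x) (t * y) = t ^ n * H 1 x y)
    (hcont : Continuous fun q : ℂ × ℂ => H 1 q.1 q.2) {α β : ℝ → ℂ} {a b : ℂ}
    (hα : Tendsto (fun p : ℝ => α p / p) atTop (𝓝 a))
    (hβ : Tendsto (fun p : ℝ => β p / p) atTop (𝓝 b)) :
    Tendsto (fun p : ℝ => H p (α p) (β p) / (p : ℂ) ^ n) atTop (𝓝 (H 1 a b)) := by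
  refine ((hcont.tendsto (a, b)).comp (hα.prodMk_nhds hβ)).congr' ?_
  filter_upwards [eventually_ne_atTop 0] with p hp
  have hp' : (p : ℂ) ≠ 0 := ofReal_ne_zero.mpr hp
  rw [eq_div_iff (pow_ne_zero n hp'), mul_comm, Function.comp_apply, ← hH,
    mul_div_cancel₀ _ hp', mul_div_cancel₀ _ hp']

open Polynomial in
theorem Polynomial.one_isBigO_eval_ofReal {Q : ℂ[X]} (hQ : Q ≠ 0) :
    (fun _ : ℝ => (1 : ℂ)) =O[atTop] fun x : ℝ => Q.eval (x : ℂ) := by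
  by_cases hd : 0 < Q.degree
  · have hQ : Tendsto (fun x : ℝ => ‖Q.eval (x : ℂ)‖) atTop atTop :=
      Q.tendsto_norm_atTop hd (by simpa using tendsto_abs_atTop_atTop)
    refine IsBigO.of_bound 1 ?_
    filter_upwards [hQ.eventually_ge_atTop 1] with x hx
    simpa using hx
  · rw [eq_C_of_degree_le_zero (not_lt.mp hd)] at hQ ⊢
    simp only [eval_C]
    exact isBigO_const_const _ (by simpa using hQ) _

theorem tendsto_div_mul_sub_sq {f g e₁ e₂ : ℝ → ℂ} {L : ℂ} (n : ℕ)
    (hfg : (fun _ => (1 : ℂ)) =O[atTop] fun p => f p * g p)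
    (hg : Tendsto (fun p : ℝ => g p / (p : ℂ) ^ n) atTop (𝓝 L))
    (h₁ : Tendsto (fun p : ℝ => (p : ℂ) ^ n * e₁ p) atTop (𝓝 0))
    (h₂ : Tendsto (fun p : ℝ => (p : ℂ) ^ n * e₂ p) atTop (𝓝 0)) :
    Tendsto (fun p => g p / f p * (e₁ p - e₂ p) ^ 2) atTop (𝓝 0) := by
  have hsmall : Tendsto (fun p : ℝ => ((p : ℂ) ^ n * e₁ p - (p : ℂ) ^ n * e₂ p) ^ 2) atTop
      (𝓝 0) := by
    simpa using (h₁.sub h₂).pow 2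
  have hbig : (fun p : ℝ => (g p / (p : ℂ) ^ n) ^ 2 * (f p * g p)⁻¹
      * ((p : ℂ) ^ n * e₁ p - (p : ℂ) ^ n * e₂ p) ^ 2) =O[atTop]
        fun p : ℝ => ((p : ℂ) ^ n * e₁ p - (p : ℂ) ^ n * e₂ p) ^ 2 := by
    simpa using (((hg.pow 2).isBigO_one ℂ).mul
      (hfg.inv_rev (.of_forall fun _ h => absurd h one_ne_zero))).mul (isBigO_refl _ _)
  refine (hbig.trans_tendsto hsmall).congr' ?_
  filter_upwards [hfg.eq_zero_imp, eventually_ne_atTop 0] with p hfgp hp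
  have hfgp : f p * g p ≠ 0 := fun h => one_ne_zero (hfgp h)
  have hp' : (p : ℂ) ≠ 0 := ofReal_ne_zero.mpr hp
  have := left_ne_zero_of_mul hfgp
  have := right_ne_zero_of_mul hfgp
  field_simp

namespace HalfPlaneCrack

def R₁ (p α β : ℂ) : ℂ := (p ^ 2 + β ^ 2) ^ 2 - 4 * α * β * p ^ 2

def R₂ (p α β : ℂ) : ℂ := (p ^ 2 + β ^ 2) ^ 2 + 4 * α * β * p ^ 2

def denom (p β : ℂ) : ℂ := 2 * β * (p ^ 2 - β ^ 2) * p

noncomputable def g₁₁ (p α β δ : ℂ) : ℂ :=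
  cexp (-(α + β) * δ) / denom p β *
    (R₁ p α β * sinh ((α + β) * δ) - R₂ p α β * sinh ((α - β) * δ)
      + 2 * (R₁ p α β ^ 2 * sinh ((α + β) * δ / 2) ^ 2
        - R₂ p α β ^ 2 * sinh ((α - β) * δ / 2) ^ 2) / R₁ p α β)

theorem g₁₁_eq {p α β δ : ℂ} (h : R₁ p α β ≠ 0) :
    g₁₁ p α β δ = R₁ p α β / denom p β * (1 - cexp (-(α * δ)) * cexp (-(β * δ)))
      - R₂ p α β / denom p β * (cexp (-(β * δ)) ^ 2 - cexp (-(α * δ)) ^ 2) / 2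
      - R₂ p α β / denom p β * (R₂ p α β / R₁ p α β
        * (cexp (-(β * δ)) - cexp (-(α * δ))) ^ 2) / 2 := by
  rw [g₁₁]
  set a := α * δ / 2
  set b := β * δ / 2
  rw [show -(α + β) * δ = -(a + a + (b + b)) by ring, show (α + β) * δ / 2 = a + b by ring,
    show (α - β) * δ / 2 = a - b by ring, show (α + β) * δ = a + a + (b + b) by ring,
    show (α - β) * δ = a + a - (b + b) by ring, show α * δ = a + a by ring,
    show β * δ = b + b by ring]
  simp only [Complex.sinh, exp_add, exp_sub, exp_neg]
  have := exp_ne_zero a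
  have := exp_ne_zero b
  field_simp
  ring

section Asymptotics

variable {α β : ℝ → ℂ} {a b : ℂ}

theorem tendsto_R₁_div_pow (hα : Tendsto (fun p : ℝ => α p / p) atTop (𝓝 a))
    (hβ : Tendsto (fun p : ℝ => β p / p) atTop (𝓝 b)) :
    Tendsto (fun p : ℝ => R₁ p (α p) (β p) / (p : ℂ) ^ 4) atTop (𝓝 (R₁ 1 a b)) :=
  tendsto_div_pow_of_homogeneous R₁ 4 (fun _ _ _ => by simp only [R₁]; ring)
    (by unfold R₁; fun_prop) hα hβ

theorem tendsto_R₂_div_pow (hα : Tendsto (fun p : ℝ => α p / p) atTop (𝓝 a))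
    (hβ : Tendsto (fun p : ℝ => β p / p) atTop (𝓝 b)) :
    Tendsto (fun p : ℝ => R₂ p (α p) (β p) / (p : ℂ) ^ 4) atTop (𝓝 (R₂ 1 a b)) :=
  tendsto_div_pow_of_homogeneous R₂ 4 (fun _ _ _ => by simp only [R₂]; ring)
    (by unfold R₂; fun_prop) hα hβ

theorem tendsto_denom_div_pow (hα : Tendsto (fun p : ℝ => α p / p) atTop (𝓝 a))
    (hβ : Tendsto (fun p : ℝ => β p / p) atTop (𝓝 b)) :
    Tendsto (fun p : ℝ => denom p (β p) / (p : ℂ) ^ 4) atTop (𝓝 (denom 1 b)) :=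
  tendsto_div_pow_of_homogeneous (fun p _ β => denom p β) 4
    (fun _ _ _ => by simp only [denom]; ring) (by unfold denom; fun_prop) hα hβ

end Asymptotics

theorem tendsto_g₁₁ {α β : ℝ → ℂ} {a b δ : ℝ} (ha : 0 < a) (hb : 0 < b) (hb1 : b < 1)
    (hδ : 0 < δ) (hα : Tendsto (fun p : ℝ => α p / p) atTop (𝓝 a))
    (hβ : Tendsto (fun p : ℝ => β p / p) atTop (𝓝 b))
    (hR : (fun _ => (1 : ℂ)) =O[atTop] fun p : ℝ => R₁ p (α p) (β p) * R₂ p (α p) (β p)) :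
    Tendsto (fun p : ℝ => g₁₁ p (α p) (β p) δ) atTop (𝓝 (R₁ 1 a b / denom 1 b)) := by
  have hdecay : ∀ {γ : ℝ → ℂ} {c : ℝ}, 0 < c → Tendsto (fun p : ℝ => γ p / p) atTop (𝓝 c) →
      ∀ n : ℕ, Tendsto (fun p : ℝ => (p : ℂ) ^ n * cexp (-(γ p * δ))) atTop (𝓝 0) :=
    fun hc hγ => tendsto_pow_mul_cexp_neg (mul_pos hc hδ)
      (by simpa [mul_div_right_comm] using hγ.mul_const (δ : ℂ))
  have hexpα : Tendsto (fun p : ℝ => cexp (-(α p * δ))) atTop (𝓝 0) := by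
    simpa using hdecay ha hα 0
  have hexpβ : Tendsto (fun p : ℝ => cexp (-(β p * δ))) atTop (𝓝 0) := by
    simpa using hdecay hb hβ 0
  have hdenom : denom 1 (b : ℂ) ≠ 0 := by
    have : denom 1 (b : ℂ) = ((2 * b * (1 - b ^ 2) : ℝ) : ℂ) := by simp [denom]
    rw [this, ofReal_ne_zero]
    have : 0 < 1 - b ^ 2 := by nlinarith
    positivity
  have hR₁ := tendsto_div_of_tendsto_div_pow 4 (tendsto_R₁_div_pow hα hβ)
    (tendsto_denom_div_pow hα hβ) hdenom
  have hR₂ := tendsto_div_of_tendsto_div_pow 4 (tendsto_R₂_div_pow hα hβ)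
    (tendsto_denom_div_pow hα hβ) hdenom
  have herr := tendsto_div_mul_sub_sq 4 hR (tendsto_R₂_div_pow hα hβ) (hdecay hb hβ 4)
    (hdecay ha hα 4)
  have hlim := ((hR₁.mul ((hexpα.mul hexpβ).const_sub 1)).sub
    ((hR₂.mul ((hexpβ.pow 2).sub (hexpα.pow 2))).div_const 2)).sub ((hR₂.mul herr).div_const 2)
  simp only [mul_zero, sub_zero, zero_pow two_ne_zero, zero_div, mul_one] at hlim
  refine hlim.congr' ?_
  filter_upwards [hR.eq_zero_imp] with p hp
  exact (g₁₁_eq fun h => one_ne_zero (hp (by rw [h, zero_mul]))).symm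

open Polynomial in
theorem one_isBigO_R₁_mul_R₂ {α β : ℝ → ℂ} {a₂ a₁ a₀ b₂ b₁ b₀ : ℂ}
    (hα : ∀ p : ℝ, α p ^ 2 = a₂ * p ^ 2 + a₁ * p + a₀)
    (hβ : ∀ p : ℝ, β p ^ 2 = b₂ * p ^ 2 + b₁ * p + b₀) (hb₀ : b₀ ≠ 0) :
    (fun _ => (1 : ℂ)) =O[atTop] fun p : ℝ => R₁ p (α p) (β p) * R₂ p (α p) (β p) := by
  set A : ℂ[X] := C a₂ * X ^ 2 + C a₁ * X + C a₀
  set B : ℂ[X] := C b₂ * X ^ 2 + C b₁ * X + C b₀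
  set Q : ℂ[X] := (X ^ 2 + B) ^ 4 - 16 * A * B * X ^ 4
  have hQ : Q ≠ 0 := fun h => by simpa [Q, A, B, hb₀] using congrArg (eval 0) h
  refine (one_isBigO_eval_ofReal hQ).congr_right fun p => ?_
  rw [show R₁ p (α p) (β p) * R₂ p (α p) (β p)
      = (p ^ 2 + β p ^ 2) ^ 4 - 16 * α p ^ 2 * β p ^ 2 * p ^ 4 by simp only [R₁, R₂]; ring,
    hα, hβ]
  simp [Q, A, B]

end HalfPlaneCrack

/-- Leading asymptotics (61) of the (1,1) entry (22) of the matrix coefficient `G(p,s)`: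
`g₁₁(p) → −γ₁` as `p → +∞`, where `γ₁ = R₀/(2β̂v_s²)` and `R₀ = 4α̂β̂ − (1 + β̂²)²`. -/
theorem stmt_19 (cl cs V s δ : ℝ) (hcs : 0 < cs) (hcl : cs < cl) (hV0 : 0 < V)
    (hVs : V < cs) (hs : 0 < s) (hδ : 0 < δ) (α β : ℝ → ℂ)
    (hα : ∀ p : ℝ, 0 < (α p).re ∧
      (α p) ^ 2 = ((Real.sqrt (1 - V ^ 2 / cl ^ 2) : ℝ) : ℂ) ^ 2 * (p : ℂ) ^ 2
        + 2 * I * (p : ℂ) * (s : ℂ) * (V : ℂ) / (cl : ℂ) ^ 2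
        + (s : ℂ) ^ 2 / (cl : ℂ) ^ 2)
    (hβ : ∀ p : ℝ, 0 < (β p).re ∧
      (β p) ^ 2 = ((Real.sqrt (1 - V ^ 2 / cs ^ 2) : ℝ) : ℂ) ^ 2 * (p : ℂ) ^ 2
        + 2 * I * (p : ℂ) * (s : ℂ) * (V : ℂ) / (cs : ℂ) ^ 2
        + (s : ℂ) ^ 2 / (cs : ℂ) ^ 2) :
    Tendsto (fun p : ℝ =>
        Complex.exp (-(α p + β p) * (δ : ℂ)) /
            (2 * β p * ((p : ℂ) ^ 2 - (β p) ^ 2) * (p : ℂ)) *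
          ((((p : ℂ) ^ 2 + (β p) ^ 2) ^ 2 - 4 * α p * β p * (p : ℂ) ^ 2) *
              Complex.sinh ((α p + β p) * (δ : ℂ))
            - (((p : ℂ) ^ 2 + (β p) ^ 2) ^ 2 + 4 * α p * β p * (p : ℂ) ^ 2) *
              Complex.sinh ((α p - β p) * (δ : ℂ))
            + 2 * ((((p : ℂ) ^ 2 + (β p) ^ 2) ^ 2 - 4 * α p * β p * (p : ℂ) ^ 2) ^ 2 *
                    Complex.sinh ((α p + β p) * (δ : ℂ) / 2) ^ 2
                  - (((p : ℂ) ^ 2 + (β p) ^ 2) ^ 2 + 4 * α p * β p * (p : ℂ) ^ 2) ^ 2 *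
                    Complex.sinh ((α p - β p) * (δ : ℂ) / 2) ^ 2) /
                (((p : ℂ) ^ 2 + (β p) ^ 2) ^ 2 - 4 * α p * β p * (p : ℂ) ^ 2)))
      atTop
      (nhds (-(((4 * Real.sqrt (1 - V ^ 2 / cl ^ 2) * Real.sqrt (1 - V ^ 2 / cs ^ 2)
          - (1 + Real.sqrt (1 - V ^ 2 / cs ^ 2) ^ 2) ^ 2) /
            (2 * Real.sqrt (1 - V ^ 2 / cs ^ 2) * (V / cs) ^ 2) : ℝ) : ℂ))) := by
  have hVcl : V ^ 2 / cl ^ 2 < 1 := by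
    rw [div_lt_one (by nlinarith)]; nlinarith
  have hVcs : V ^ 2 / cs ^ 2 < 1 := by
    rw [div_lt_one (by positivity)]; nlinarith
  set a := Real.sqrt (1 - V ^ 2 / cl ^ 2)
  set b := Real.sqrt (1 - V ^ 2 / cs ^ 2)
  have ha : 0 < a := Real.sqrt_pos.mpr (by linarith)
  have hb : 0 < b := Real.sqrt_pos.mpr (by linarith)
  have hb2 : b ^ 2 = 1 - (V / cs) ^ 2 := by rw [Real.sq_sqrt (by linarith), div_pow]
  have hb1 : b < 1 := by nlinarith [div_pos hV0 hcs]
  have hα' : ∀ p : ℝ,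
      α p ^ 2 = (a : ℂ) ^ 2 * p ^ 2 + (2 * I * s * V / cl ^ 2) * p + s ^ 2 / cl ^ 2 :=
    fun p => by rw [(hα p).2]; ring
  have hβ' : ∀ p : ℝ,
      β p ^ 2 = (b : ℂ) ^ 2 * p ^ 2 + (2 * I * s * V / cs ^ 2) * p + s ^ 2 / cs ^ 2 :=
    fun p => by rw [(hβ p).2]; ring
  have hγ₁ : (-((4 * a * b - (1 + b ^ 2) ^ 2) / (2 * b * (V / cs) ^ 2) : ℝ) : ℂ)
      = HalfPlaneCrack.R₁ 1 a b / HalfPlaneCrack.denom 1 b := by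
    rw [show (V / cs) ^ 2 = 1 - b ^ 2 by linarith]
    simp only [HalfPlaneCrack.R₁, HalfPlaneCrack.denom]
    push_cast
    ring
  rw [hγ₁]
  exact HalfPlaneCrack.tendsto_g₁₁ ha hb hb1 hδ
    (tendsto_div_of_sq_eq ha (fun p => (hα p).1) hα')
    (tendsto_div_of_sq_eq hb (fun p => (hβ p).1) hβ')
    (HalfPlaneCrack.one_isBigO_R₁_mul_R₂ hα' hβ' (by simp [hs.ne', hcs.ne']))
end
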